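/- arXiv:1003.1864 — 2 statements merged into one kernel-verified Lean document; each statement's English description precedes it below -/
import Mathlib

section
/- Let p = 2, q = 4. Suppose g_{k,s} is a sequence of natural numbers (k ≥ 1, s ∈ {0,1,2}) satisfying g_{k,s} ≤ g_{k+1}/p^{2−s} + 1 for s < 2 and g_{k,2} = g_{k+1}, where g_{k+1} ≤ q^{k+1} + q^k − q + 1. Then g_{k,s} ≤ q^{k-1}(q+1)p^s for all k ≥ 1 and s ∈ {0,1,2}. -/
/-- Let `p = 2`, `q = 4`. If the genera `g_{k,s}` (natural numbers, `s ∈ {0,1,2}`) satisfy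
`g_{k,s} ≤ g_{k+1}/p^{2-s} + 1` for `s < 2` and `g_{k,2} = g_{k+1}`, where
`g_{k+1} ≤ q^{k+1} + q^k - q + 1`, then `g_{k,s} ≤ q^{k-1}(q+1)p^s` for all `k ≥ 1`,
`s ∈ {0,1,2}`. -/
theorem genus_step_bound
    (g : ℕ → ℕ → ℕ) (gstep : ℕ → ℕ)
    (hrec : ∀ k s : ℕ, s < 2 → (g k s : ℝ) ≤ (gstep (k + 1) : ℝ) / 2 ^ (2 - s) + 1)
    (htop : ∀ k : ℕ, g k 2 = gstep (k + 1))
    (hgstep : ∀ k : ℕ, (gstep (k + 1) : ℝ) ≤ 4 ^ (k + 1) + 4 ^ k - 4 + 1) :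
    ∀ k : ℕ, 1 ≤ k → ∀ s : ℕ, s ≤ 2 → (g k s : ℝ) ≤ 4 ^ (k - 1) * (4 + 1) * 2 ^ s := by
  intro k hk s hs
  obtain ⟨m, rfl⟩ : ∃ m, k = m + 1 := ⟨k - 1, (Nat.succ_pred_eq_of_pos hk).symm⟩
  simp only [Nat.add_sub_cancel]
  have hG := hgstep (m + 1)
  have hpow : (4 : ℝ) ^ (m + 1 + 1) = 4 ^ m * 16 := by ring
  have hpow' : (4 : ℝ) ^ (m + 1) = 4 ^ m * 4 := by ring
  interval_cases s
  · -- s = 0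
    have h1 := hrec (m + 1) 0 (by norm_num)
    have h2 : (g (m + 1) 0 : ℝ) < (5 * 4 ^ m : ℕ) + 1 := by
      push_cast
      rw [hpow, hpow'] at hG
      norm_num at h1 ⊢
      nlinarith [pow_pos (by norm_num : (0:ℝ) < 4) m]
    have h3 : g (m + 1) 0 ≤ 5 * 4 ^ m := by exact_mod_cast Nat.lt_succ_iff.mp (by exact_mod_cast h2)
    calc (g (m + 1) 0 : ℝ) ≤ ((5 * 4 ^ m : ℕ) : ℝ) := by exact_mod_cast h3
      _ = 4 ^ m * (4 + 1) * 2 ^ 0 := by push_cast; ring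
  · -- s = 1
    have h1 := hrec (m + 1) 1 (by norm_num)
    rw [hpow, hpow'] at hG
    norm_num at h1 ⊢
    nlinarith
  · -- s = 2
    have h1 : (g (m + 1) 2 : ℝ) = gstep (m + 1 + 1) := by rw [htop]
    rw [h1]
    rw [hpow, hpow'] at hG
    norm_num
    nlinarith
end

section
/- (Generalized Chudnovsky-type bound with degrees 1, 2, 4.) Let q be a prime power, F/F_q a function field, Q a place of degree n, D a divisor avoiding Q and all places of a set P consisting of N_1 places of degree 1, N_2 of degree 2, N_4 of degree 4, and let 0 ≤ l_i ≤ N_i for i = 1,2,4. If the evaluation map Ev_Q : L(D) → F_Q ≅ F_{q^n} is surjective and the map Ev_P : L(2D) → F_q^{N_1} × F_q^{l_1} × F_{q^2}^{N_2} × F_{q^2}^{l_2} × F_{q^4}^{N_4} × F_{q^4}^{l_4} sending f to its values and first derivative coefficients (with respect to local parameters) at the places of P is injective, then μ_q(n) ≤ N_1 + 2l_1 + 3N_2 + 6l_2 + μ_q(4)(N_4 + 2l_4). -/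
/-- The bilinear complexity (tensor rank of multiplication) of a field extension `L/K`. -/
noncomputable def bilinearComplexity (K L : Type*) [Field K] [Field L] [Algebra K L] : ℕ :=
  sInf {r : ℕ | ∃ (a b : Fin r → (L →ₗ[K] K)) (c : Fin r → L),
    ∀ x y : L, x * y = ∑ i, (a i x * b i y) • c i}

/-- A place `P` of the function field `F/Fq` with residue field `E` (of degree
`[E : Fq] = deg P`): the valuation ring `O = O_P`, the evaluation `f ↦ f(P)` (reduction
modulo `P`, an `Fq`-algebra homomorphism), and the first derivative evaluation
`f ↦ f'(P)` (the coefficient of the local parameter `t` in the local expansion of `f`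
at `P`), which is `Fq`-linear and satisfies the Leibniz rule
`(fg)'(P) = f(P)g'(P) + f'(P)g(P)`. -/
structure PlaceEval (Fq F E : Type*) [Field Fq] [Field F] [Field E]
    [Algebra Fq F] [Algebra Fq E] where
  O : Subalgebra Fq F
  ev : O →ₐ[Fq] E
  ev' : O →ₗ[Fq] E
  leibniz : ∀ f g : O, ev' (f * g) = ev f * ev' g + ev' f * ev g

/-!
Chudnovsky's interpolation method. Lift `x, y ∈ F_Q` to `f, g ∈ L(D)` along the surjection
`Ev_Q`; then `xy = (fg)(Q)`, and `fg ∈ L(2D)` is recovered from `Ev_P(fg)` by injectivity.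
Each coordinate of `Ev_P(fg)` is a bilinear expression in the local data of `f` and `g`:
`(fg)(P) = f(P)g(P)` takes `μ_q(deg P)` multiplications and
`(fg)'(P) = f(P)g'(P) + f'(P)g(P)` takes `2 μ_q(deg P)`, with `μ_q(1) = 1` and `μ_q(2) ≤ 3`
(Karatsuba). Composing with a linear section of `Ev_Q` and a linear retraction of `Ev_P` turns
this into a bilinear multiplication algorithm for `F_{q^n}` of the stated length.
-/

open Module

section BilinFormula

variable {K M N P : Type*} [CommSemiring K] [AddCommMonoid M] [Module K M]
  [AddCommMonoid N] [Module K N] [AddCommMonoid P] [Module K P]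

def HasBilinFormula (B : M →ₗ[K] N →ₗ[K] P) (r : ℕ) : Prop :=
  ∃ (a : Fin r → M →ₗ[K] K) (b : Fin r → N →ₗ[K] K) (c : Fin r → P),
    ∀ x y, B x y = ∑ i, (a i x * b i y) • c i

namespace HasBilinFormula

theorem of_fintype {ι : Type*} [Fintype ι] {B : M →ₗ[K] N →ₗ[K] P}
    (a : ι → M →ₗ[K] K) (b : ι → N →ₗ[K] K) (c : ι → P)
    (h : ∀ x y, B x y = ∑ i, (a i x * b i y) • c i) :
    HasBilinFormula B (Fintype.card ι) := by
  let e := (Fintype.equivFin ι).symm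
  refine ⟨a ∘ e, b ∘ e, c ∘ e, fun x y => ?_⟩
  rw [h, ← e.sum_comp]
  rfl

theorem zero : HasBilinFormula (0 : M →ₗ[K] N →ₗ[K] P) 0 :=
  ⟨Fin.elim0, Fin.elim0, Fin.elim0, fun _ _ => by simp⟩

theorem add {B₁ B₂ : M →ₗ[K] N →ₗ[K] P} {r₁ r₂ : ℕ} (h₁ : HasBilinFormula B₁ r₁)
    (h₂ : HasBilinFormula B₂ r₂) : HasBilinFormula (B₁ + B₂) (r₁ + r₂) := by
  obtain ⟨a₁, b₁, c₁, h₁⟩ := h₁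
  obtain ⟨a₂, b₂, c₂, h₂⟩ := h₂
  refine ⟨Fin.append a₁ a₂, Fin.append b₁ b₂, Fin.append c₁ c₂, fun x y => ?_⟩
  simp [Fin.sum_univ_add, h₁, h₂]

theorem sum {ι : Type*} {s : Finset ι} {B : ι → M →ₗ[K] N →ₗ[K] P} {r : ι → ℕ}
    (h : ∀ i ∈ s, HasBilinFormula (B i) (r i)) :
    HasBilinFormula (∑ i ∈ s, B i) (∑ i ∈ s, r i) := by
  classical
  induction s using Finset.induction_on with
  | empty => exact zero
  | insert i s hi ih =>
    rw [Finset.sum_insert hi, Finset.sum_insert hi]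
    exact (h i (s.mem_insert_self i)).add (ih fun j hj => h j (Finset.mem_insert_of_mem hj))

theorem compl₁₂ {M' N' : Type*} [AddCommMonoid M'] [Module K M'] [AddCommMonoid N']
    [Module K N'] {B : M →ₗ[K] N →ₗ[K] P} {r : ℕ} (h : HasBilinFormula B r)
    (f : M' →ₗ[K] M) (g : N' →ₗ[K] N) : HasBilinFormula (B.compl₁₂ f g) r := by
  obtain ⟨a, b, c, h⟩ := h
  exact ⟨fun i => a i ∘ₗ f, fun i => b i ∘ₗ g, c, fun x y => h (f x) (g y)⟩

theorem compr₂ {P' : Type*} [AddCommMonoid P'] [Module K P'] {B : M →ₗ[K] N →ₗ[K] P}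
    {r : ℕ} (h : HasBilinFormula B r) (T : P →ₗ[K] P') :
    HasBilinFormula (B.compr₂ T) r := by
  obtain ⟨a, b, c, h⟩ := h
  exact ⟨a, b, fun i => T (c i), fun x y => by simp [h]⟩

theorem compr₂_prod {P₁ P₂ : Type*} [AddCommMonoid P₁] [Module K P₁] [AddCommMonoid P₂]
    [Module K P₂] {B : M →ₗ[K] N →ₗ[K] P} {f₁ : P →ₗ[K] P₁} {f₂ : P →ₗ[K] P₂} {r₁ r₂ : ℕ}
    (h₁ : HasBilinFormula (B.compr₂ f₁) r₁) (h₂ : HasBilinFormula (B.compr₂ f₂) r₂) :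
    HasBilinFormula (B.compr₂ (f₁.prod f₂)) (r₁ + r₂) := by
  have : B.compr₂ (f₁.prod f₂) =
      (B.compr₂ f₁).compr₂ (LinearMap.inl K P₁ P₂) +
        (B.compr₂ f₂).compr₂ (LinearMap.inr K P₁ P₂) :=
    LinearMap.ext₂ fun x y => by simp
  rw [this]
  exact (h₁.compr₂ _).add (h₂.compr₂ _)

theorem compr₂_pi {ι : Type*} [Fintype ι] {Pᵢ : ι → Type*} [∀ i, AddCommMonoid (Pᵢ i)]
    [∀ i, Module K (Pᵢ i)] {B : M →ₗ[K] N →ₗ[K] P} {f : ∀ i, P →ₗ[K] Pᵢ i} {r : ℕ}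
    (h : ∀ i, HasBilinFormula (B.compr₂ (f i)) r) :
    HasBilinFormula (B.compr₂ (LinearMap.pi f)) (Fintype.card ι * r) := by
  classical
  have : B.compr₂ (LinearMap.pi f) = ∑ i, (B.compr₂ (f i)).compr₂ (LinearMap.single K Pᵢ i) :=
    LinearMap.ext₂ fun x y => by
      ext j
      simp
  rw [this, ← smul_eq_mul, ← Finset.card_univ, ← Finset.sum_const]
  exact sum fun i _ => (h i).compr₂ _

theorem of_basis {ι κ : Type*} [Fintype ι] [Fintype κ] (bM : Basis ι K M) (bN : Basis κ K N)
    (B : M →ₗ[K] N →ₗ[K] P) : HasBilinFormula B (Fintype.card ι * Fintype.card κ) := by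
  rw [← Fintype.card_prod]
  refine of_fintype (fun p => bM.coord p.1) (fun p => bN.coord p.2)
    (fun p => B (bM p.1) (bN p.2)) fun x y => ?_
  conv_lhs => rw [← bM.sum_repr x, ← bN.sum_repr y]
  simp only [map_sum, map_smul, LinearMap.sum_apply, LinearMap.smul_apply, Fintype.sum_prod_type,
    smul_smul, Basis.coord_apply, Finset.smul_sum, mul_comm (bN.repr y _)]
  exact Finset.sum_comm

end HasBilinFormula

end BilinFormula

section Complexity

variable {K L : Type*} [Field K] [Field L] [Algebra K L]

theorem bilinearComplexity_le {r : ℕ} (h : HasBilinFormula (LinearMap.mul K L) r) :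
    bilinearComplexity K L ≤ r :=
  Nat.sInf_le h

theorem hasBilinFormula_bilinearComplexity [FiniteDimensional K L] :
    HasBilinFormula (LinearMap.mul K L) (bilinearComplexity K L) :=
  Nat.sInf_mem (s := {r | HasBilinFormula (LinearMap.mul K L) r})
    ⟨_, .of_basis (finBasis K L) (finBasis K L) (LinearMap.mul K L)⟩

end Complexity

theorem hasBilinFormula_mul_self (K : Type*) [CommSemiring K] :
    HasBilinFormula (LinearMap.mul K K) 1 :=
  ⟨fun _ => LinearMap.id, fun _ => LinearMap.id, fun _ => 1, fun x y => by simp⟩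

/-- Karatsuba: with `x = x₀e₀ + x₁e₁`, `y = y₀e₀ + y₁e₁` one has
`xy = x₀y₀(e₀² - e₀e₁) + (x₀ + x₁)(y₀ + y₁)e₀e₁ + x₁y₁(e₁² - e₀e₁)`. -/
theorem hasBilinFormula_mul_of_finrank_eq_two (K L : Type*) [Field K] [CommRing L]
    [Algebra K L] (h : finrank K L = 2) : HasBilinFormula (LinearMap.mul K L) 3 := by
  have : FiniteDimensional K L := .of_finrank_pos (by omega)
  let e := finBasisOfFinrankEq K L h
  refine ⟨![e.coord 0, e.coord 0 + e.coord 1, e.coord 1],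
    ![e.coord 0, e.coord 0 + e.coord 1, e.coord 1],
    ![e 0 * e 0 - e 0 * e 1, e 0 * e 1, e 1 * e 1 - e 0 * e 1], fun x y => ?_⟩
  conv_lhs => rw [← e.sum_repr x, ← e.sum_repr y]
  simp only [Fin.sum_univ_two, Fin.sum_univ_three, Matrix.cons_val_zero, Matrix.cons_val_one,
    Matrix.cons_val_two, Matrix.head_cons, Matrix.tail_cons, LinearMap.mul_apply',
    LinearMap.add_apply, Basis.coord_apply, Algebra.smul_def, map_add, map_mul]
  ring

theorem bilinearComplexity_le_of_interpolation {K L V W A : Type*} [Field K] [Field L]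
    [Algebra K L] [AddCommGroup V] [Module K V] [AddCommGroup W] [Module K W]
    [AddCommGroup A] [Module K A] (B : V →ₗ[K] V →ₗ[K] W) (φ : V →ₗ[K] L)
    (hφ : Function.Surjective φ) (φ₂ : W →ₗ[K] L) (hφ₂ : ∀ f g, φ₂ (B f g) = φ f * φ g)
    (ψ : W →ₗ[K] A) (hψ : Function.Injective ψ) {r : ℕ} (h : HasBilinFormula (B.compr₂ ψ) r) :
    bilinearComplexity K L ≤ r := by
  obtain ⟨s, hs⟩ := φ.exists_rightInverse_of_surjective (LinearMap.range_eq_top.mpr hφ)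
  obtain ⟨R, hR⟩ := ψ.exists_leftInverse_of_injective (LinearMap.ker_eq_bot.mpr hψ)
  have : LinearMap.mul K L = ((B.compr₂ ψ).compl₁₂ s s).compr₂ (φ₂ ∘ₗ R) :=
    LinearMap.ext₂ fun x y => by
      simp only [LinearMap.mul_apply', LinearMap.compr₂_apply, LinearMap.compl₁₂_apply,
        LinearMap.comp_apply, ← LinearMap.comp_apply R ψ, hR, LinearMap.id_apply, hφ₂,
        ← LinearMap.comp_apply φ s, hs]
  exact bilinearComplexity_le (this ▸ (h.compl₁₂ s s).compr₂ _)

namespace Submodule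

variable {K A : Type*} [CommSemiring K] [Semiring A] [Algebra K A]

def inclusionSubalgebra (V : Submodule K A) (O : Subalgebra K A) (h : ∀ f ∈ V, f ∈ O) :
    V →ₗ[K] O where
  toFun f := ⟨f, h f f.2⟩
  map_add' _ _ := rfl
  map_smul' _ _ := rfl

def restrictMul (V W : Submodule K A) (h : ∀ f ∈ V, ∀ g ∈ V, f * g ∈ W) :
    V →ₗ[K] V →ₗ[K] W :=
  LinearMap.mk₂ K (fun f g => ⟨f * g, h f f.2 g g.2⟩)
    (fun _ _ _ => Subtype.ext (add_mul _ _ _)) (fun _ _ _ => Subtype.ext (smul_mul_assoc _ _ _))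
    (fun _ _ _ => Subtype.ext (mul_add _ _ _)) (fun _ _ _ => Subtype.ext (mul_smul_comm _ _ _))

end Submodule

namespace PlaceEval

variable {K F E : Type*} [Field K] [Field F] [Field E] [Algebra K F] [Algebra K E]
  {V W : Submodule K F} (hmul : ∀ f ∈ V, ∀ g ∈ V, f * g ∈ W) {r : ℕ}

theorem hasBilinFormula_ev (P : PlaceEval K F E) (hV : ∀ f ∈ V, f ∈ P.O)
    (hW : ∀ f ∈ W, f ∈ P.O) (hE : HasBilinFormula (LinearMap.mul K E) r) :
    HasBilinFormula ((V.restrictMul W hmul).compr₂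
      (P.ev.toLinearMap ∘ₗ W.inclusionSubalgebra P.O hW)) r := by
  let evV := P.ev.toLinearMap ∘ₗ V.inclusionSubalgebra P.O hV
  have : (V.restrictMul W hmul).compr₂ (P.ev.toLinearMap ∘ₗ W.inclusionSubalgebra P.O hW) =
      (LinearMap.mul K E).compl₁₂ evV evV :=
    LinearMap.ext₂ fun f g => map_mul P.ev ⟨f, hV f f.2⟩ ⟨g, hV g g.2⟩
  exact this ▸ hE.compl₁₂ evV evV

theorem hasBilinFormula_ev' (P : PlaceEval K F E) (hV : ∀ f ∈ V, f ∈ P.O)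
    (hW : ∀ f ∈ W, f ∈ P.O) (hE : HasBilinFormula (LinearMap.mul K E) r) :
    HasBilinFormula ((V.restrictMul W hmul).compr₂ (P.ev' ∘ₗ W.inclusionSubalgebra P.O hW))
      (2 * r) := by
  let evV := P.ev.toLinearMap ∘ₗ V.inclusionSubalgebra P.O hV
  let ev'V := P.ev' ∘ₗ V.inclusionSubalgebra P.O hV
  have : (V.restrictMul W hmul).compr₂ (P.ev' ∘ₗ W.inclusionSubalgebra P.O hW) =
      (LinearMap.mul K E).compl₁₂ evV ev'V + (LinearMap.mul K E).compl₁₂ ev'V evV :=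
    LinearMap.ext₂ fun f g => P.leibniz ⟨f, hV f f.2⟩ ⟨g, hV g g.2⟩
  rw [this, two_mul]
  exact (hE.compl₁₂ evV ev'V).add (hE.compl₁₂ ev'V evV)

variable {ι : Type*}

def values (P : ι → PlaceEval K F E) (W : Submodule K F) (hW : ∀ i, ∀ f ∈ W, f ∈ (P i).O) :
    W →ₗ[K] ι → E :=
  LinearMap.pi fun i => (P i).ev.toLinearMap ∘ₗ W.inclusionSubalgebra (P i).O (hW i)

def derivatives (P : ι → PlaceEval K F E) (W : Submodule K F)
    (hW : ∀ i, ∀ f ∈ W, f ∈ (P i).O) : W →ₗ[K] ι → E :=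
  LinearMap.pi fun i => (P i).ev' ∘ₗ W.inclusionSubalgebra (P i).O (hW i)

variable [Fintype ι]

theorem hasBilinFormula_values (P : ι → PlaceEval K F E) (hV : ∀ i, ∀ f ∈ V, f ∈ (P i).O)
    (hW : ∀ i, ∀ f ∈ W, f ∈ (P i).O) (hE : HasBilinFormula (LinearMap.mul K E) r) :
    HasBilinFormula ((V.restrictMul W hmul).compr₂ (values P W hW)) (Fintype.card ι * r) :=
  HasBilinFormula.compr₂_pi fun i => (P i).hasBilinFormula_ev hmul (hV i) (hW i) hE

theorem hasBilinFormula_derivatives (P : ι → PlaceEval K F E)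
    (hV : ∀ i, ∀ f ∈ V, f ∈ (P i).O) (hW : ∀ i, ∀ f ∈ W, f ∈ (P i).O)
    (hE : HasBilinFormula (LinearMap.mul K E) r) :
    HasBilinFormula ((V.restrictMul W hmul).compr₂ (derivatives P W hW))
      (Fintype.card ι * (2 * r)) :=
  HasBilinFormula.compr₂_pi fun i => (P i).hasBilinFormula_ev' hmul (hV i) (hW i) hE

end PlaceEval

theorem chudnovsky_deg_1_2_4_general
    (Fq F E2 E4 EQ : Type*) [Field Fq] [Field F]
    [Field E2] [Field E4] [Field EQ]
    [Algebra Fq F] [Algebra Fq E2] [Algebra Fq E4] [Algebra Fq EQ]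
    (N1 N2 N4 l1 l2 l4 : ℕ)
    (hE2 : Module.finrank Fq E2 = 2) (hE4 : Module.finrank Fq E4 = 4)
    (hl1 : l1 ≤ N1) (hl2 : l2 ≤ N2) (hl4 : l4 ≤ N4)
    -- the degree-`n` place `Q` and the places of `P` of degrees 1, 2, 4
    (Q : PlaceEval Fq F EQ)
    (P1 : Fin N1 → PlaceEval Fq F Fq)
    (P2 : Fin N2 → PlaceEval Fq F E2)
    (P4 : Fin N4 → PlaceEval Fq F E4)
    -- the Riemann–Roch spaces `L(D)` and `L(2D)`, with `L(D)·L(D) ⊆ L(2D)`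
    (LD L2D : Submodule Fq F)
    (hmul : ∀ f ∈ LD, ∀ g ∈ LD, f * g ∈ L2D)
    -- `Q` and the places of `P` are not in the support of `D` (so all the evaluations
    -- below are defined, i.e. `L(D), L(2D) ⊆ O_P` for each place involved)
    (hQD : ∀ f ∈ LD, f ∈ Q.O) (hQ2D : ∀ f ∈ L2D, f ∈ Q.O)
    (hP1D : ∀ i, ∀ f ∈ LD, f ∈ (P1 i).O) (hP12D : ∀ i, ∀ f ∈ L2D, f ∈ (P1 i).O)
    (hP2D : ∀ i, ∀ f ∈ LD, f ∈ (P2 i).O) (hP22D : ∀ i, ∀ f ∈ L2D, f ∈ (P2 i).O)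
    (hP4D : ∀ i, ∀ f ∈ LD, f ∈ (P4 i).O) (hP42D : ∀ i, ∀ f ∈ L2D, f ∈ (P4 i).O)
    -- compatibility of `Ev_Q` with products: `(fg)(Q) = f(Q)g(Q)` (automatic from `ev`)
    -- a) `Ev_Q : L(D) → F_{q^n}` is surjective
    (hsurj : Function.Surjective fun f : LD => Q.ev ⟨f.1, hQD f.1 f.2⟩)
    -- b) `Ev_P : L(2D) → Fq^{N₁} × Fq^{l₁} × E₂^{N₂} × E₂^{l₂} × E₄^{N₄} × E₄^{l₄}`
    --    is injective
    (hinj : Function.Injective fun f : L2D =>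
      ((fun i : Fin N1 => (P1 i).ev ⟨f.1, hP12D i f.1 f.2⟩),
       (fun i : Fin l1 => (P1 (Fin.castLE hl1 i)).ev' ⟨f.1, hP12D _ f.1 f.2⟩),
       (fun i : Fin N2 => (P2 i).ev ⟨f.1, hP22D i f.1 f.2⟩),
       (fun i : Fin l2 => (P2 (Fin.castLE hl2 i)).ev' ⟨f.1, hP22D _ f.1 f.2⟩),
       (fun i : Fin N4 => (P4 i).ev ⟨f.1, hP42D i f.1 f.2⟩),
       (fun i : Fin l4 => (P4 (Fin.castLE hl4 i)).ev' ⟨f.1, hP42D _ f.1 f.2⟩))) :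
    bilinearComplexity Fq EQ ≤
      N1 + 2 * l1 + 3 * N2 + 6 * l2 + bilinearComplexity Fq E4 * (N4 + 2 * l4) := by
  have : FiniteDimensional Fq E4 := .of_finrank_pos (by omega)
  have hμ₁ := hasBilinFormula_mul_self Fq
  have hμ₂ := hasBilinFormula_mul_of_finrank_eq_two Fq E2 hE2
  have hμ₄ := hasBilinFormula_bilinearComplexity (K := Fq) (L := E4)
  have hEvP := (PlaceEval.hasBilinFormula_values hmul P1 hP1D hP12D hμ₁).compr₂_prod
    ((PlaceEval.hasBilinFormula_derivatives hmul (P1 ∘ Fin.castLE hl1) (fun _ => hP1D _)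
      (fun _ => hP12D _) hμ₁).compr₂_prod
    ((PlaceEval.hasBilinFormula_values hmul P2 hP2D hP22D hμ₂).compr₂_prod
    ((PlaceEval.hasBilinFormula_derivatives hmul (P2 ∘ Fin.castLE hl2) (fun _ => hP2D _)
      (fun _ => hP22D _) hμ₂).compr₂_prod
    ((PlaceEval.hasBilinFormula_values hmul P4 hP4D hP42D hμ₄).compr₂_prod
    (PlaceEval.hasBilinFormula_derivatives hmul (P4 ∘ Fin.castLE hl4) (fun _ => hP4D _)
      (fun _ => hP42D _) hμ₄)))))
  refine (bilinearComplexity_le_of_interpolation _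
    (Q.ev.toLinearMap ∘ₗ LD.inclusionSubalgebra Q.O hQD) hsurj
    (Q.ev.toLinearMap ∘ₗ L2D.inclusionSubalgebra Q.O hQ2D) (fun f g => ?_) _ ?_ hEvP).trans_eq ?_
  · exact map_mul Q.ev ⟨f, hQD f f.2⟩ ⟨g, hQD g g.2⟩
  · exact hinj
  · simp only [Fintype.card_fin]
    ring

/-- Generalized Chudnovsky-type bound with places of degrees 1, 2 and 4 and first
derivative evaluations (Proposition 3.1): if `Ev_Q : L(D) → F_Q ≅ F_{q^n}` is surjective
and the evaluation map `Ev_P` on `L(2D)` — taking values and first derivatives at `N₁`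
places of degree 1 (derivatives at the first `l₁`), `N₂` places of degree 2 (derivatives
at the first `l₂`) and `N₄` places of degree 4 (derivatives at the first `l₄`) — is
injective, then `μ_q(n) ≤ N₁ + 2l₁ + 3N₂ + 6l₂ + μ_q(4)(N₄ + 2l₄)`. -/
theorem chudnovsky_deg_1_2_4
    (Fq F E2 E4 EQ : Type*) [Field Fq] [Fintype Fq] [Field F]
    [Field E2] [Field E4] [Field EQ]
    [Algebra Fq F] [Algebra Fq E2] [Algebra Fq E4] [Algebra Fq EQ]
    (n N1 N2 N4 l1 l2 l4 : ℕ)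
    (hn : Module.finrank Fq EQ = n)
    (hE2 : Module.finrank Fq E2 = 2) (hE4 : Module.finrank Fq E4 = 4)
    (hl1 : l1 ≤ N1) (hl2 : l2 ≤ N2) (hl4 : l4 ≤ N4)
    -- the degree-`n` place `Q` and the places of `P` of degrees 1, 2, 4
    (Q : PlaceEval Fq F EQ)
    (P1 : Fin N1 → PlaceEval Fq F Fq)
    (P2 : Fin N2 → PlaceEval Fq F E2)
    (P4 : Fin N4 → PlaceEval Fq F E4)
    -- the Riemann–Roch spaces `L(D)` and `L(2D)`, with `L(D)·L(D) ⊆ L(2D)`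
    (LD L2D : Submodule Fq F)
    (hmul : ∀ f ∈ LD, ∀ g ∈ LD, f * g ∈ L2D)
    -- `Q` and the places of `P` are not in the support of `D` (so all the evaluations
    -- below are defined, i.e. `L(D), L(2D) ⊆ O_P` for each place involved)
    (hQD : ∀ f ∈ LD, f ∈ Q.O) (hQ2D : ∀ f ∈ L2D, f ∈ Q.O)
    (hP1D : ∀ i, ∀ f ∈ LD, f ∈ (P1 i).O) (hP12D : ∀ i, ∀ f ∈ L2D, f ∈ (P1 i).O)
    (hP2D : ∀ i, ∀ f ∈ LD, f ∈ (P2 i).O) (hP22D : ∀ i, ∀ f ∈ L2D, f ∈ (P2 i).O)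
    (hP4D : ∀ i, ∀ f ∈ LD, f ∈ (P4 i).O) (hP42D : ∀ i, ∀ f ∈ L2D, f ∈ (P4 i).O)
    -- compatibility of `Ev_Q` with products: `(fg)(Q) = f(Q)g(Q)` (automatic from `ev`)
    -- a) `Ev_Q : L(D) → F_{q^n}` is surjective
    (hsurj : Function.Surjective fun f : LD => Q.ev ⟨f.1, hQD f.1 f.2⟩)
    -- b) `Ev_P : L(2D) → Fq^{N₁} × Fq^{l₁} × E₂^{N₂} × E₂^{l₂} × E₄^{N₄} × E₄^{l₄}`
    --    is injective
    (hinj : Function.Injective fun f : L2D =>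
      ((fun i : Fin N1 => (P1 i).ev ⟨f.1, hP12D i f.1 f.2⟩),
       (fun i : Fin l1 => (P1 (Fin.castLE hl1 i)).ev' ⟨f.1, hP12D _ f.1 f.2⟩),
       (fun i : Fin N2 => (P2 i).ev ⟨f.1, hP22D i f.1 f.2⟩),
       (fun i : Fin l2 => (P2 (Fin.castLE hl2 i)).ev' ⟨f.1, hP22D _ f.1 f.2⟩),
       (fun i : Fin N4 => (P4 i).ev ⟨f.1, hP42D i f.1 f.2⟩),
       (fun i : Fin l4 => (P4 (Fin.castLE hl4 i)).ev' ⟨f.1, hP42D _ f.1 f.2⟩))) :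
    bilinearComplexity Fq EQ ≤
      N1 + 2 * l1 + 3 * N2 + 6 * l2 + bilinearComplexity Fq E4 * (N4 + 2 * l4) :=
  chudnovsky_deg_1_2_4_general Fq F E2 E4 EQ N1 N2 N4 l1 l2 l4 hE2 hE4 hl1 hl2 hl4 Q P1 P2 P4 LD L2D
    hmul hQD hQ2D hP1D hP12D hP2D hP22D hP4D hP42D hsurj hinj
end
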